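/- arXiv:2207.07959 — 2 statements merged into one kernel-verified Lean document; each statement's English description precedes it below -/
import Mathlib

section
/- Let a ∈ C([0,1]) be strongly degenerate with degeneracy point x₀ ∈ [0,1] and assume Hypothesis (H). Then there exists a constant C > 0 such that for every u ∈ H²_a(0,1) one has ‖u'‖²_{L²(0,1)} ≤ C (‖u‖²_{L²(0,1)} + ‖√a·u''‖²_{L²(0,1)}). Consequently, the norms ‖u‖²_{H²_a(0,1)} = ‖u‖²_{L²(0,1)} + ‖u'‖²_{L²(0,1)} + ‖√a·u''‖²_{L²(0,1)} and ‖u‖²_{2,a} = ‖u‖²_{L²(0,1)} + ‖√a·u''‖²_{L²(0,1)} are equivalent on H²_a(0,1). -/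
/-!
Hypothesis (H) gives `|x - x₀| ^ p ≤ M a(x)` on `[0, 1]` with `p = (K + 2) / 2 ∈ (1, 2)`
(raising the exponent is harmless since `|x - x₀| ≤ 1`, and `p > 1` makes the weight below
usable). On a side `(x₀, b]` write `u'(t) = u'(b) - ∫_t^b u''`; Cauchy–Schwarz against the
weight `(s - x₀) ^ p` gives `(u'(t) - u'(b))² ≤ ‖√a u''‖² · M (t - x₀) ^ (1 - p) / (p - 1)`,
and `(t - x₀) ^ (1 - p)` is integrable because `p < 2`. So it remains to bound `u'(b)`: on the
half of `(x₀, b]` away from `x₀` the derivative stays uniformly close to `u'(b)`, hence `u'(b)`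
is controlled by the difference quotient of `u` between two points where `u²` lies below its
mean, i.e. by `‖u‖`. The other side follows by the reflection `x ↦ -x`.
-/

open MeasureTheory Set Filter

/-- `f` is absolutely continuous on `[c,d]` with (a.e.) derivative `g`,
expressed via the fundamental theorem of calculus. -/
def ACOn (c d : ℝ) (f g : ℝ → ℝ) : Prop :=
  MeasureTheory.IntegrableOn g (Set.Icc c d) ∧
    ∀ x ∈ Set.Icc c d, f x = f c + ∫ t in c..x, g t

/-- `f` is locally absolutely continuous on `[0,1] \ {x₀}` with derivative `g`. -/
def LocACOn (x₀ : ℝ) (f g : ℝ → ℝ) : Prop :=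
  ∀ c d : ℝ, 0 ≤ c → d ≤ 1 → c ≤ d → x₀ ∉ Set.Icc c d → ACOn c d f g

/-- `a` is weakly degenerate with degeneracy point `x₀`. -/
def WeaklyDeg (a : ℝ → ℝ) (x₀ : ℝ) : Prop :=
  ContinuousOn a (Set.Icc 0 1) ∧ x₀ ∈ Set.Icc (0:ℝ) 1 ∧ a x₀ = 0 ∧
    (∀ x ∈ Set.Icc (0:ℝ) 1, x ≠ x₀ → 0 < a x) ∧
    MeasureTheory.IntegrableOn (fun x => 1 / a x) (Set.Ioo 0 1)

/-- `a` is strongly degenerate with degeneracy point `x₀`. -/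
def StronglyDeg (a : ℝ → ℝ) (x₀ : ℝ) : Prop :=
  ContinuousOn a (Set.Icc 0 1) ∧ x₀ ∈ Set.Icc (0:ℝ) 1 ∧ a x₀ = 0 ∧
    (∀ x ∈ Set.Icc (0:ℝ) 1, x ≠ x₀ → 0 < a x) ∧
    ¬ MeasureTheory.IntegrableOn (fun x => 1 / a x) (Set.Ioo 0 1)

/-- Hypothesis (H): there is `K ∈ [1,2)` such that `x ↦ |x-x₀|^K / a x` is
non-increasing on `[0,x₀)` and non-decreasing on `(x₀,1]`. -/
def HypH (a : ℝ → ℝ) (x₀ : ℝ) : Prop :=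
  ∃ K : ℝ, 1 ≤ K ∧ K < 2 ∧
    AntitoneOn (fun x => |x - x₀| ^ K / a x) (Set.Ico 0 x₀) ∧
    MonotoneOn (fun x => |x - x₀| ^ K / a x) (Set.Ioc x₀ 1)

/-- The squared `L²(0,1)` norm. -/
noncomputable def sqL2 (f : ℝ → ℝ) : ℝ := ∫ x in Set.Ioo (0:ℝ) 1, (f x) ^ 2

namespace ACOn

variable {c d : ℝ} {f g : ℝ → ℝ}

theorem intervalIntegrable (h : ACOn c d f g) {x y : ℝ} (hx : x ∈ Icc c d) (hy : y ∈ Icc c d) :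
    IntervalIntegrable g volume x y :=
  (h.1.mono_set (uIcc_subset_Icc hx hy)).intervalIntegrable

theorem sub_eq_integral (h : ACOn c d f g) {x y : ℝ} (hx : x ∈ Icc c d) (hy : y ∈ Icc c d) :
    f y - f x = ∫ t in x..y, g t := by
  have hc : c ∈ Icc c d := ⟨le_rfl, hx.1.trans hx.2⟩
  rw [h.2 x hx, h.2 y hy, ← intervalIntegral.integral_interval_sub_left
    (h.intervalIntegrable hc hy) (h.intervalIntegrable hc hx)]
  ring

theorem mono (h : ACOn c d f g) {c' d' : ℝ} (hc : c ≤ c') (hcd : c' ≤ d') (hd : d' ≤ d) :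
    ACOn c' d' f g := by
  refine ⟨h.1.mono_set (Icc_subset_Icc hc hd), fun x hx => ?_⟩
  have hsub : Icc c' d' ⊆ Icc c d := Icc_subset_Icc hc hd
  rw [← h.sub_eq_integral (hsub ⟨le_rfl, hcd⟩) (hsub hx)]
  ring

theorem continuousOn (h : ACOn c d f g) : ContinuousOn f (Icc c d) := by
  rcases lt_or_ge d c with hdc | hcd
  · simp [Icc_eq_empty_of_lt hdc]
  have hprim := intervalIntegral.continuousOn_primitive_interval
    (h.1.mono_set (uIcc_of_le hcd).subset)
  rw [uIcc_of_le hcd] at hprim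
  exact (continuousOn_const.add hprim).congr h.2

theorem neg (h : ACOn c d f g) : ACOn c d (fun x => -f x) (fun x => -g x) :=
  ⟨h.1.neg, fun x hx => by
    show -f x = -f c + ∫ t in c..x, -g t
    rw [h.2 x hx, intervalIntegral.integral_neg]; ring⟩

theorem comp_neg (h : ACOn c d f g) : ACOn (-d) (-c) (fun x => f (-x)) (fun x => -g (-x)) := by
  refine ⟨?_, fun x hx => ?_⟩
  · have := (Measure.measurePreserving_neg volume).integrableOn_comp_preimage
      measurableEmbedding_neg (f := -g) (s := Icc c d)
    simpa [Function.comp_def] using this.mpr h.1.neg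
  · have hx' : -x ∈ Icc c d := ⟨by linarith [hx.2], by linarith [hx.1]⟩
    have hd : d ∈ Icc c d := ⟨by linarith [hx.1, hx.2], le_rfl⟩
    show f (-x) = f (-(-d)) + ∫ t in -d..x, -g (-t)
    rw [intervalIntegral.integral_neg, intervalIntegral.integral_comp_neg (fun t => g t), neg_neg,
      ← h.sub_eq_integral hx' hd]
    ring

end ACOn

theorem setIntegral_Ioo_comp_neg (f : ℝ → ℝ) (c d : ℝ) :
    ∫ x in Ioo (-d) (-c), f (-x) = ∫ x in Ioo c d, f x := by
  simpa using (Measure.measurePreserving_neg volume).setIntegral_preimage_emb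
    measurableEmbedding_neg f (Ioo c d)

theorem MeasureTheory.IntegrableOn.comp_neg_Ioo {f : ℝ → ℝ} {c d : ℝ}
    (h : IntegrableOn f (Ioo c d)) : IntegrableOn (fun x => f (-x)) (Ioo (-d) (-c)) := by
  have := (Measure.measurePreserving_neg volume).integrableOn_comp_preimage
    measurableEmbedding_neg (f := f) (s := Ioo c d)
  simpa [Function.comp_def] using this.mpr h

theorem exists_mem_Ioo_le_setIntegral_div {f : ℝ → ℝ} {c d : ℝ} (hcd : c < d)
    (hf : IntegrableOn f (Ioo c d)) : ∃ x ∈ Ioo c d, f x ≤ (∫ y in Ioo c d, f y) / (d - c) := by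
  obtain ⟨x, hx, hle⟩ := exists_le_setAverage (by simp [hcd]) (by simp) hf
  rw [setAverage_eq, Real.volume_real_Ioo_of_le hcd.le, smul_eq_mul, inv_mul_eq_div] at hle
  exact ⟨x, hx, hle⟩

theorem sq_integral_mul_le {α : Type*} [MeasurableSpace α] {μ : Measure α} {f g : α → ℝ}
    (hf : MemLp f 2 μ) (hg : MemLp g 2 μ) :
    (∫ x, f x * g x ∂μ) ^ 2 ≤ (∫ x, f x ^ 2 ∂μ) * ∫ x, g x ^ 2 ∂μ := by
  have holder := integral_mul_norm_le_Lp_mul_Lq Real.HolderConjugate.two_two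
    (by simpa using hf) (by simpa using hg)
  simp only [Real.norm_eq_abs, Real.rpow_two, sq_abs, ← Real.sqrt_eq_rpow] at holder
  have habs : |∫ x, f x * g x ∂μ| ≤ √(∫ x, f x ^ 2 ∂μ) * √(∫ x, g x ^ 2 ∂μ) :=
    (abs_integral_le_integral_abs.trans_eq (by simp_rw [abs_mul])).trans holder
  calc (∫ x, f x * g x ∂μ) ^ 2 = |∫ x, f x * g x ∂μ| ^ 2 := (sq_abs _).symm
    _ ≤ (√(∫ x, f x ^ 2 ∂μ) * √(∫ x, g x ^ 2 ∂μ)) ^ 2 := by gcongr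
    _ = _ := by
      rw [mul_pow, Real.sq_sqrt (integral_nonneg fun _ => sq_nonneg _),
        Real.sq_sqrt (integral_nonneg fun _ => sq_nonneg _)]

theorem setIntegral_Ioo_rpow_neg_le {x₀ t b p : ℝ} (ht : x₀ < t) (htb : t ≤ b) (hp : 1 < p) :
    ∫ s in Ioo t b, (s - x₀) ^ (-p) ≤ (t - x₀) ^ (1 - p) / (p - 1) := by
  have h0 : (0 : ℝ) ∉ uIcc (t - x₀) (b - x₀) := by
    rw [uIcc_of_le (by linarith)]; exact fun h => by linarith [h.1]
  rw [← integral_Ioc_eq_integral_Ioo, ← intervalIntegral.integral_of_le htb,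
    intervalIntegral.integral_comp_sub_right (fun s => s ^ (-p)),
    integral_rpow (Or.inr ⟨by linarith, h0⟩), show -p + 1 = -(p - 1) by ring, div_neg,
    ← neg_div, neg_sub, show -(p - 1) = 1 - p by ring]
  gcongr
  exact sub_le_self _ (Real.rpow_nonneg (by linarith) _)

theorem sq_intervalIntegral_le_rpow_mul {g : ℝ → ℝ} {x₀ t b p : ℝ} (ht : x₀ < t) (htb : t ≤ b)
    (hp : 1 < p) (hg : AEStronglyMeasurable g (volume.restrict (Ioo t b)))
    (hwg : IntegrableOn (fun s => (s - x₀) ^ p * g s ^ 2) (Ioo t b)) :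
    (∫ s in t..b, g s) ^ 2 ≤
      (t - x₀) ^ (1 - p) / (p - 1) * ∫ s in Ioo t b, (s - x₀) ^ p * g s ^ 2 := by
  have hpos : ∀ s ∈ Ioo t b, 0 < s - x₀ := fun s hs => by linarith [hs.1]
  have hcont : ∀ r : ℝ, ContinuousOn (fun s => √((s - x₀) ^ r)) (Icc t b) := fun r =>
    ((continuousOn_id.sub continuousOn_const).rpow_const
      fun s hs => Or.inl (by linarith [hs.1] : s - x₀ ≠ 0)).sqrt
  have hsq : ∀ r : ℝ, ∀ s ∈ Ioo t b, √((s - x₀) ^ r) ^ 2 = (s - x₀) ^ r := fun r s hs =>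
    Real.sq_sqrt (Real.rpow_nonneg (hpos s hs).le r)
  have hmeas : ∀ r : ℝ, AEStronglyMeasurable (fun s => √((s - x₀) ^ r))
      (volume.restrict (Ioo t b)) := fun r =>
    ((hcont r).mono Ioo_subset_Icc_self).aestronglyMeasurable measurableSet_Ioo
  have hf₁ : MemLp (fun s => √((s - x₀) ^ (-p))) 2 (volume.restrict (Ioo t b)) := by
    refine (memLp_two_iff_integrable_sq (hmeas _)).mpr ?_
    refine IntegrableOn.congr_fun ?_ (fun s hs => (hsq _ s hs).symm) measurableSet_Ioo
    exact (((hcont (-p)).pow 2).integrableOn_Icc.mono_set Ioo_subset_Icc_self).congr_fun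
      (hsq _) measurableSet_Ioo
  have hf₂ : MemLp (fun s => √((s - x₀) ^ p) * g s) 2 (volume.restrict (Ioo t b)) :=
    (memLp_two_iff_integrable_sq ((hmeas p).mul hg)).mpr <|
      hwg.congr_fun (fun s hs => by simp only [Pi.mul_apply, mul_pow, hsq p s hs])
        measurableSet_Ioo
  have hfactor : ∀ s ∈ Ioo t b, √((s - x₀) ^ (-p)) * (√((s - x₀) ^ p) * g s) = g s := by
    intro s hs
    rw [← mul_assoc, ← Real.sqrt_mul (Real.rpow_nonneg (hpos s hs).le _),
      ← Real.rpow_add (hpos s hs), neg_add_cancel, Real.rpow_zero, Real.sqrt_one, one_mul]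
  have hweighted : ∫ s in Ioo t b, (√((s - x₀) ^ p) * g s) ^ 2 =
      ∫ s in Ioo t b, (s - x₀) ^ p * g s ^ 2 :=
    setIntegral_congr_fun measurableSet_Ioo fun s hs => by rw [mul_pow, hsq p s hs]
  have hcs := sq_integral_mul_le hf₁ hf₂
  rw [setIntegral_congr_fun measurableSet_Ioo hfactor,
    setIntegral_congr_fun measurableSet_Ioo (hsq _), hweighted] at hcs
  rw [intervalIntegral.integral_of_le htb, integral_Ioc_eq_integral_Ioo]
  exact hcs.trans (mul_le_mul_of_nonneg_right (setIntegral_Ioo_rpow_neg_le ht htb hp)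
    (setIntegral_nonneg measurableSet_Ioo fun s hs =>
      mul_nonneg (Real.rpow_nonneg (hpos s hs).le _) (sq_nonneg _)))

theorem setIntegral_sq_le_of_sq_sub_le_rpow {f : ℝ → ℝ} {x₀ b c D e : ℝ} (hb : x₀ ≤ b)
    (he : -1 < e) (hf : ∀ t ∈ Ioo x₀ b, (f t - c) ^ 2 ≤ D * (t - x₀) ^ e) :
    ∫ t in Ioo x₀ b, f t ^ 2 ≤ 2 * (b - x₀) * c ^ 2 + 2 * D * ((b - x₀) ^ (e + 1) / (e + 1)) := by
  have hconst : IntegrableOn (fun _ : ℝ => 2 * c ^ 2) (Ioo x₀ b) := integrableOn_const (by simp)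
  have hint : IntegrableOn (fun t => (t - x₀) ^ e) (Ioo x₀ b) := by
    have := (intervalIntegral.intervalIntegrable_rpow' he (a := 0) (b := b - x₀)).comp_sub_right x₀
    rwa [zero_add, sub_add_cancel, intervalIntegrable_iff_integrableOn_Ioo_of_le hb] at this
  have hval : ∫ t in Ioo x₀ b, (t - x₀) ^ e = (b - x₀) ^ (e + 1) / (e + 1) := by
    rw [← integral_Ioc_eq_integral_Ioo, ← intervalIntegral.integral_of_le hb,
      intervalIntegral.integral_comp_sub_right (fun t => t ^ e), integral_rpow (Or.inl he),
      sub_self, Real.zero_rpow (by linarith), sub_zero]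
  calc ∫ t in Ioo x₀ b, f t ^ 2
      ≤ ∫ t in Ioo x₀ b, (2 * c ^ 2 + 2 * D * (t - x₀) ^ e) := by
        refine integral_mono_of_nonneg (ae_of_all _ fun _ => sq_nonneg _)
          (hconst.add (hint.const_mul _))
          ((ae_restrict_iff' measurableSet_Ioo).mpr (ae_of_all _ fun t ht => ?_))
        have := hf t ht
        nlinarith [sq_nonneg (2 * c - f t)]
    _ = 2 * (b - x₀) * c ^ 2 + 2 * D * ((b - x₀) ^ (e + 1) / (e + 1)) := by
        rw [integral_add hconst (hint.const_mul _), setIntegral_const,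
          Real.volume_real_Ioo_of_le hb, integral_const_mul, hval, smul_eq_mul]
        ring

theorem ACOn.abs_mul_le_of_abs_sub_le {u u' : ℝ → ℝ} {m b c ρ p q : ℝ} (hu : ACOn m b u u')
    (hp : p ∈ Icc m b) (hq : q ∈ Icc m b) (hpq : p ≤ q)
    (hρ : ∀ t ∈ Icc m b, |u' t - c| ≤ ρ) :
    |c| * (q - p) ≤ |u p| + |u q| + ρ * (q - p) := by
  have hdev : |∫ t in p..q, (u' t - c)| ≤ ρ * (q - p) := by
    have := intervalIntegral.norm_integral_le_of_norm_le_const (f := fun t => u' t - c)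
      fun t ht => hρ t ⟨hp.1.trans (uIoc_of_le hpq ▸ ht).1.le, (uIoc_of_le hpq ▸ ht).2.trans hq.2⟩
    rwa [abs_of_nonneg (sub_nonneg.mpr hpq)] at this
  have hmean : c * (q - p) = (u q - u p) - ∫ t in p..q, (u' t - c) := by
    rw [intervalIntegral.integral_sub (f := u') (g := fun _ => c) (hu.intervalIntegrable hp hq)
      intervalIntegrable_const, intervalIntegral.integral_const, smul_eq_mul,
      hu.sub_eq_integral hp hq]
    ring
  calc |c| * (q - p) = |c * (q - p)| := by rw [abs_mul, abs_of_nonneg (sub_nonneg.mpr hpq)]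
    _ ≤ |u q - u p| + |∫ t in p..q, (u' t - c)| := hmean ▸ abs_sub _ _
    _ ≤ |u p| + |u q| + ρ * (q - p) := by linarith [abs_sub (u q) (u p)]

theorem ACOn.sq_le_of_sq_sub_le {u u' : ℝ → ℝ} {m b c ε : ℝ} (hmb : m < b) (hu : ACOn m b u u')
    (hε : ∀ t ∈ Icc m b, (u' t - c) ^ 2 ≤ ε) :
    c ^ 2 ≤ 216 / (b - m) ^ 3 * (∫ x in Ioo m b, u x ^ 2) + 2 * ε := by
  set I := ∫ x in Ioo m b, u x ^ 2
  set ℓ := b - m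
  have hℓ : 0 < ℓ := sub_pos.mpr hmb
  have hε0 : 0 ≤ ε := (sq_nonneg _).trans (hε m ⟨le_rfl, hmb.le⟩)
  have hint : IntegrableOn (fun x => u x ^ 2) (Ioo m b) :=
    (hu.continuousOn.pow 2).integrableOn_Icc.mono_set Ioo_subset_Icc_self
  have hsmall : ∀ p, m ≤ p → p + ℓ / 3 ≤ b →
      ∃ x ∈ Ioo p (p + ℓ / 3), u x ^ 2 ≤ 3 / ℓ * I := by
    intro p hmp hpb
    have hsub : Ioo p (p + ℓ / 3) ⊆ Ioo m b := Ioo_subset_Ioo hmp hpb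
    obtain ⟨x, hx, hle⟩ := exists_mem_Ioo_le_setIntegral_div (by linarith) (hint.mono_set hsub)
    refine ⟨x, hx, hle.trans ?_⟩
    calc (∫ y in Ioo p (p + ℓ / 3), u y ^ 2) / (p + ℓ / 3 - p)
        = 3 / ℓ * ∫ y in Ioo p (p + ℓ / 3), u y ^ 2 := by rw [add_sub_cancel_left]; field_simp
      _ ≤ 3 / ℓ * I := by
        gcongr
        exact setIntegral_mono_set hint (ae_of_all _ fun _ => sq_nonneg _) hsub.eventuallyLE
  obtain ⟨q₁, hq₁, hu₁⟩ := hsmall m le_rfl (by linarith)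
  obtain ⟨q₂, hq₂, hu₂⟩ := hsmall (b - ℓ / 3) (by linarith) (by linarith)
  rw [sub_add_cancel] at hq₂
  have hδ : ℓ / 3 ≤ q₂ - q₁ := by linarith [hq₁.2, hq₂.1]
  set S := |u q₁| + |u q₂|
  have hc : |c| ≤ 3 / ℓ * S + √ε := by
    have h1 := hu.abs_mul_le_of_abs_sub_le ⟨hq₁.1.le, by linarith [hq₁.2]⟩
      ⟨by linarith [hq₂.1], hq₂.2.le⟩ (by linarith) fun t ht => Real.abs_le_sqrt (hε t ht)
    have h2 : |c| - √ε ≤ S / (q₂ - q₁) := (le_div_iff₀ (by linarith)).mpr (by linarith)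
    have h3 : S / (q₂ - q₁) ≤ 3 / ℓ * S := by
      calc S / (q₂ - q₁) ≤ S / (ℓ / 3) := by gcongr
        _ = 3 / ℓ * S := by field_simp
    linarith
  have hS : S ^ 2 ≤ 2 * (u q₁ ^ 2 + u q₂ ^ 2) := by
    nlinarith [sq_nonneg (|u q₁| - |u q₂|), sq_abs (u q₁), sq_abs (u q₂)]
  calc c ^ 2 = |c| ^ 2 := (sq_abs c).symm
    _ ≤ (3 / ℓ * S + √ε) ^ 2 := by gcongr
    _ ≤ 2 * (3 / ℓ * S) ^ 2 + 2 * √ε ^ 2 := by nlinarith [sq_nonneg (3 / ℓ * S - √ε)]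
    _ = 18 / ℓ ^ 2 * S ^ 2 + 2 * ε := by rw [Real.sq_sqrt hε0]; field_simp; ring
    _ ≤ 18 / ℓ ^ 2 * (2 * (3 / ℓ * I + 3 / ℓ * I)) + 2 * ε := by gcongr; linarith
    _ = 216 / ℓ ^ 3 * I + 2 * ε := by field_simp; ring


theorem ACOn.sq_sub_le_rpow_mul_integral {a u' u'' : ℝ → ℝ} {x₀ t b p M : ℝ} (ht : x₀ < t)
    (htb : t ≤ b) (hp : 1 < p) (hw : ∀ s ∈ Ioo t b, |s - x₀| ^ p ≤ M * a s)
    (hac : ACOn t b u' u'') (hA : IntegrableOn (fun x => a x * u'' x ^ 2) (Ioo t b)) :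
    (u' t - u' b) ^ 2 ≤ M / (p - 1) * (∫ s in Ioo t b, a s * u'' s ^ 2) * (t - x₀) ^ (1 - p) := by
  have hpos : ∀ s ∈ Ioo t b, 0 < s - x₀ := fun s hs => by linarith [hs.1]
  have hweight : ∀ s ∈ Ioo t b, (s - x₀) ^ p * u'' s ^ 2 ≤ M * (a s * u'' s ^ 2) := by
    intro s hs
    rw [← mul_assoc, ← abs_of_pos (hpos s hs)]
    exact mul_le_mul_of_nonneg_right (hw s hs) (sq_nonneg _)
  have hmeas : AEStronglyMeasurable u'' (volume.restrict (Ioo t b)) :=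
    (hac.1.mono_set Ioo_subset_Icc_self).aestronglyMeasurable
  have hint : IntegrableOn (fun s => (s - x₀) ^ p * u'' s ^ 2) (Ioo t b) := by
    refine (hA.const_mul M).mono' ?_ ?_
    · exact ((((continuousOn_id.sub continuousOn_const).rpow_const fun _ _ =>
        Or.inr (by linarith)).aestronglyMeasurable measurableSet_Ioo)).mul (hmeas.pow 2)
    · refine (ae_restrict_iff' measurableSet_Ioo).mpr (ae_of_all _ fun s hs => ?_)
      rw [Real.norm_of_nonneg (mul_nonneg (Real.rpow_nonneg (hpos s hs).le _) (sq_nonneg _))]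
      exact hweight s hs
  have hrep : u' t - u' b = -∫ s in t..b, u'' s := by
    rw [hac.2 b ⟨htb, le_rfl⟩]; ring
  calc (u' t - u' b) ^ 2 = (∫ s in t..b, u'' s) ^ 2 := by rw [hrep, neg_sq]
    _ ≤ (t - x₀) ^ (1 - p) / (p - 1) * ∫ s in Ioo t b, (s - x₀) ^ p * u'' s ^ 2 :=
      sq_intervalIntegral_le_rpow_mul ht htb hp hmeas hint
    _ ≤ (t - x₀) ^ (1 - p) / (p - 1) * ∫ s in Ioo t b, M * (a s * u'' s ^ 2) :=
      mul_le_mul_of_nonneg_left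
        (setIntegral_mono_on hint (hA.const_mul M) measurableSet_Ioo hweight)
        (div_nonneg (Real.rpow_nonneg (sub_pos.mpr ht).le _) (by linarith))
    _ = M / (p - 1) * (∫ s in Ioo t b, a s * u'' s ^ 2) * (t - x₀) ^ (1 - p) := by
      rw [integral_const_mul]; ring

theorem ACOn.integral_sq_le_of_sq_sub_le_rpow {u u' : ℝ → ℝ} {x₀ b c D e : ℝ} (hb : x₀ < b)
    (he1 : -1 < e) (he0 : e ≤ 0) (hD : 0 ≤ D) (hu : ACOn x₀ b u u')
    (hc : ∀ t ∈ Ioc x₀ b, (u' t - c) ^ 2 ≤ D * (t - x₀) ^ e) :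
    ∫ x in Ioo x₀ b, u' x ^ 2 ≤ 3456 / (b - x₀) ^ 2 * (∫ x in Ioo x₀ b, u x ^ 2) +
      (4 * (b - x₀) * ((b - x₀) / 2) ^ e + 2 * ((b - x₀) ^ (e + 1) / (e + 1))) * D := by
  set L := b - x₀ with hL_def
  set ℓ := L / 2 with hℓ_def
  have hL : 0 < L := sub_pos.mpr hb
  have hℓ : 0 < ℓ := half_pos hL
  have hend : c ^ 2 ≤ 216 / ℓ ^ 3 * (∫ x in Ioo x₀ b, u x ^ 2) + 2 * (D * ℓ ^ e) := by
    have hmb : x₀ + ℓ < b := by linarith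
    have h := (hu.mono (by linarith) hmb.le le_rfl).sq_le_of_sq_sub_le hmb
      fun t ht => (hc t ⟨by linarith [ht.1], ht.2⟩).trans <| mul_le_mul_of_nonneg_left
        (Real.rpow_le_rpow_of_nonpos hℓ (by linarith [ht.1]) he0) hD
    rw [show b - (x₀ + ℓ) = ℓ by linarith] at h
    refine h.trans ?_
    gcongr 216 / ℓ ^ 3 * ?_ + _
    have hu2 : IntegrableOn (fun x => u x ^ 2) (Ioo x₀ b) :=
      (hu.continuousOn.pow 2).integrableOn_Icc.mono_set Ioo_subset_Icc_self
    exact setIntegral_mono_set hu2 (ae_of_all _ fun _ => sq_nonneg _)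
      (Ioo_subset_Ioo_left (by linarith : x₀ ≤ x₀ + ℓ)).eventuallyLE
  calc ∫ x in Ioo x₀ b, u' x ^ 2
      ≤ 2 * L * c ^ 2 + 2 * D * (L ^ (e + 1) / (e + 1)) :=
        setIntegral_sq_le_of_sq_sub_le_rpow hb.le he1 fun t ht => hc t ⟨ht.1, ht.2.le⟩
    _ ≤ 2 * L * (216 / ℓ ^ 3 * (∫ x in Ioo x₀ b, u x ^ 2) + 2 * (D * ℓ ^ e)) +
        2 * D * (L ^ (e + 1) / (e + 1)) := by gcongr
    _ = _ := by field_simp; ring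

theorem exists_integral_sq_deriv_le_right {a : ℝ → ℝ} {x₀ b p M : ℝ} (hb : x₀ ≤ b) (hp1 : 1 < p)
    (hp2 : p < 2) (hM : 0 ≤ M) (hw : ∀ s ∈ Ioo x₀ b, |s - x₀| ^ p ≤ M * a s) :
    ∃ C, 0 ≤ C ∧ ∀ u u' u'' : ℝ → ℝ, ACOn x₀ b u u' → (∀ t ∈ Ioc x₀ b, ACOn t b u' u'') →
      IntegrableOn (fun x => a x * u'' x ^ 2) (Ioo x₀ b) →
      ∫ x in Ioo x₀ b, u' x ^ 2 ≤
        C * ((∫ x in Ioo x₀ b, u x ^ 2) + ∫ x in Ioo x₀ b, a x * u'' x ^ 2) := by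
  rcases hb.eq_or_lt with rfl | hb
  · exact ⟨0, le_rfl, fun _ _ _ _ _ _ => by simp⟩
  set L := b - x₀
  have hL : 0 < L := sub_pos.mpr hb
  have hp : 0 < p - 1 := sub_pos.mpr hp1
  set c₁ := 3456 / L ^ 2
  set c₂ := (4 * L * (L / 2) ^ (1 - p) + 2 * (L ^ (1 - p + 1) / (1 - p + 1))) * (M / (p - 1))
  have hc₁ : 0 ≤ c₁ := by positivity
  have hc₂ : 0 ≤ c₂ := by
    have := Real.rpow_pos_of_pos (half_pos hL) (1 - p)
    have := Real.rpow_pos_of_pos hL (1 - p + 1)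
    have : 0 < 1 - p + 1 := by linarith
    positivity
  refine ⟨c₁ + c₂, add_nonneg hc₁ hc₂, fun u u' u'' hu hu' hA => ?_⟩
  set A := ∫ x in Ioo x₀ b, a x * u'' x ^ 2
  set B := ∫ x in Ioo x₀ b, u x ^ 2
  have ha : ∀ s ∈ Ioo x₀ b, 0 < a s := fun s hs => pos_of_mul_pos_right
    ((Real.rpow_pos_of_pos (abs_pos.mpr (sub_ne_zero.mpr hs.1.ne')) p).trans_le (hw s hs)) hM
  have hA0 : 0 ≤ A := setIntegral_nonneg measurableSet_Ioo fun s hs =>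
    mul_nonneg (ha s hs).le (sq_nonneg _)
  have hB0 : 0 ≤ B := setIntegral_nonneg measurableSet_Ioo fun _ _ => sq_nonneg _
  have htail : ∀ t ∈ Ioc x₀ b, (u' t - u' b) ^ 2 ≤ M / (p - 1) * A * (t - x₀) ^ (1 - p) := by
    intro t ht
    have hsub : Ioo t b ⊆ Ioo x₀ b := Ioo_subset_Ioo_left ht.1.le
    refine ((hu' t ht).sq_sub_le_rpow_mul_integral ht.1 ht.2 hp1 (fun s hs => hw s (hsub hs))
      (hA.mono_set hsub)).trans ?_
    gcongr
    · exact Real.rpow_nonneg (sub_pos.mpr ht.1).le _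
    exact setIntegral_mono_set hA ((ae_restrict_iff' measurableSet_Ioo).mpr
      (ae_of_all _ fun s hs => mul_nonneg (ha s hs).le (sq_nonneg _))) hsub.eventuallyLE
  calc ∫ x in Ioo x₀ b, u' x ^ 2 ≤ c₁ * B + c₂ * A := by
        refine (hu.integral_sq_le_of_sq_sub_le_rpow hb (by linarith) (by linarith)
          (by positivity) htail).trans_eq ?_
        ring
    _ ≤ (c₁ + c₂) * (B + A) := by nlinarith [mul_nonneg hc₁ hA0, mul_nonneg hc₂ hB0]

theorem exists_integral_sq_deriv_le_left {a : ℝ → ℝ} {x₀ b p M : ℝ} (hb : b ≤ x₀) (hp1 : 1 < p)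
    (hp2 : p < 2) (hM : 0 ≤ M) (hw : ∀ s ∈ Ioo b x₀, |s - x₀| ^ p ≤ M * a s) :
    ∃ C, 0 ≤ C ∧ ∀ u u' u'' : ℝ → ℝ, ACOn b x₀ u u' → (∀ t ∈ Ico b x₀, ACOn b t u' u'') →
      IntegrableOn (fun x => a x * u'' x ^ 2) (Ioo b x₀) →
      ∫ x in Ioo b x₀, u' x ^ 2 ≤
        C * ((∫ x in Ioo b x₀, u x ^ 2) + ∫ x in Ioo b x₀, a x * u'' x ^ 2) := by
  obtain ⟨C, hC, hright⟩ := exists_integral_sq_deriv_le_right (a := fun x => a (-x))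
    (neg_le_neg hb) hp1 hp2 hM fun s hs => by
      simpa [abs_sub_comm, add_comm] using hw (-s) ⟨by linarith [hs.2], by linarith [hs.1]⟩
  refine ⟨C, hC, fun u u' u'' hu hu' hA => ?_⟩
  have h := hright (fun x => u (-x)) (fun x => -u' (-x)) (fun x => u'' (-x)) hu.comp_neg
    (fun t ht => by simpa using (hu' (-t) ⟨by linarith [ht.2], by linarith [ht.1]⟩).comp_neg.neg)
    hA.comp_neg_Ioo
  simpa only [neg_sq, setIntegral_Ioo_comp_neg (fun x => u' x ^ 2),
    setIntegral_Ioo_comp_neg (fun x => u x ^ 2),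
    setIntegral_Ioo_comp_neg (fun x => a x * u'' x ^ 2)] using h

theorem HypH.exists_rpow_abs_sub_le {a : ℝ → ℝ} {x₀ : ℝ} (hH : HypH a x₀) (hx₀ : x₀ ∈ Icc 0 1)
    (hpos : ∀ x ∈ Icc (0 : ℝ) 1, x ≠ x₀ → 0 < a x) :
    ∃ p M : ℝ, 1 < p ∧ p < 2 ∧ 0 ≤ M ∧ ∀ s ∈ Icc (0 : ℝ) 1, s ≠ x₀ → |s - x₀| ^ p ≤ M * a s := by
  obtain ⟨K, hK1, hK2, hanti, hmono⟩ := hH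
  set M := max (|0 - x₀| ^ K / a 0) (|1 - x₀| ^ K / a 1)
  have hM : 0 ≤ M := by
    rcases eq_or_ne x₀ 1 with rfl | h1
    · exact le_max_of_le_left (div_nonneg (Real.rpow_nonneg (abs_nonneg _) _)
        (hpos 0 ⟨le_rfl, zero_le_one⟩ zero_ne_one).le)
    · exact le_max_of_le_right (div_nonneg (Real.rpow_nonneg (abs_nonneg _) _)
        (hpos 1 ⟨zero_le_one, le_rfl⟩ h1.symm).le)
  refine ⟨(K + 2) / 2, M, by linarith, by linarith, hM, fun s hs hsx => ?_⟩
  have hK : |s - x₀| ^ K ≤ M * a s := by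
    rw [← div_le_iff₀ (hpos s hs hsx)]
    rcases hsx.lt_or_gt with hlt | hgt
    · exact (hanti ⟨le_rfl, hs.1.trans_lt hlt⟩ ⟨hs.1, hlt⟩ hs.1).trans (le_max_left _ _)
    · exact (hmono ⟨hgt, hs.2⟩ ⟨hgt.trans_le hs.2, le_rfl⟩ hs.2).trans (le_max_right _ _)
  refine le_trans (Real.rpow_le_rpow_of_exponent_ge' (abs_nonneg _) ?_ (by linarith) (by linarith))
    hK
  rw [abs_le]
  constructor <;> linarith [hs.1, hs.2, hx₀.1, hx₀.2]

theorem setIntegral_Ioo_add_Ioo {f : ℝ → ℝ} {a b c : ℝ} (hab : a ≤ b) (hbc : b ≤ c)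
    (hf : IntegrableOn f (Ioo a c)) :
    (∫ x in Ioo a b, f x) + ∫ x in Ioo b c, f x = ∫ x in Ioo a c, f x := by
  have hint : ∀ {x y}, a ≤ x → x ≤ y → y ≤ c → IntervalIntegrable f volume x y :=
    fun hx hxy hy => (intervalIntegrable_iff_integrableOn_Ioo_of_le hxy).mpr
      (hf.mono_set (Ioo_subset_Ioo hx hy))
  have := intervalIntegral.integral_add_adjacent_intervals (hint le_rfl hab hbc)
    (hint hab hbc le_rfl)
  simpa only [intervalIntegral.integral_of_le, hab, hbc, hab.trans hbc,
    integral_Ioc_eq_integral_Ioo] using this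

theorem exists_sqL2_deriv_le {a : ℝ → ℝ} {x₀ p M : ℝ} (hx₀ : x₀ ∈ Icc (0 : ℝ) 1)
    (ha : ∀ x ∈ Icc (0 : ℝ) 1, 0 ≤ a x) (hp1 : 1 < p) (hp2 : p < 2) (hM : 0 ≤ M)
    (hw : ∀ s ∈ Icc (0 : ℝ) 1, s ≠ x₀ → |s - x₀| ^ p ≤ M * a s) :
    ∃ C, 0 ≤ C ∧ ∀ u u' u'' : ℝ → ℝ, ACOn 0 1 u u' →
      IntegrableOn (fun x => u' x ^ 2) (Ioo 0 1) → LocACOn x₀ u' u'' →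
      IntegrableOn (fun x => a x * u'' x ^ 2) (Ioo 0 1) →
      sqL2 u' ≤ C * (sqL2 u + ∫ x in Ioo (0 : ℝ) 1, a x * u'' x ^ 2) := by
  obtain ⟨C₁, hC₁, hleft⟩ := exists_integral_sq_deriv_le_left hx₀.1 hp1 hp2 hM
    fun s hs => hw s ⟨hs.1.le, hs.2.le.trans hx₀.2⟩ hs.2.ne
  obtain ⟨C₂, hC₂, hright⟩ := exists_integral_sq_deriv_le_right hx₀.2 hp1 hp2 hM
    fun s hs => hw s ⟨hx₀.1.trans hs.1.le, hs.2.le⟩ hs.1.ne'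
  refine ⟨C₁ + C₂, add_nonneg hC₁ hC₂, fun u u' u'' hu hu'2 hloc hA => ?_⟩
  have hu2 : IntegrableOn (fun x => u x ^ 2) (Ioo 0 1) :=
    (hu.continuousOn.pow 2).integrableOn_Icc.mono_set Ioo_subset_Icc_self
  have hmono : ∀ {f : ℝ → ℝ} {s : Set ℝ}, (∀ x ∈ Ioo (0 : ℝ) 1, 0 ≤ f x) →
      IntegrableOn f (Ioo 0 1) → s ⊆ Ioo 0 1 → ∫ x in s, f x ≤ ∫ x in Ioo (0 : ℝ) 1, f x :=
    fun hf0 hf hs => setIntegral_mono_set hf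
      ((ae_restrict_iff' measurableSet_Ioo).mpr (ae_of_all _ hf0)) hs.eventuallyLE
  have hu0 : ∀ x ∈ Ioo (0 : ℝ) 1, 0 ≤ u x ^ 2 := fun _ _ => sq_nonneg _
  have hA0 : ∀ x ∈ Ioo (0 : ℝ) 1, 0 ≤ a x * u'' x ^ 2 := fun x hx =>
    mul_nonneg (ha x (Ioo_subset_Icc_self hx)) (sq_nonneg _)
  have hl := hleft u u' u'' (hu.mono le_rfl hx₀.1 hx₀.2)
    (fun t ht => hloc 0 t le_rfl (ht.2.le.trans hx₀.2) ht.1 fun h => ht.2.not_ge h.2)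
    (hA.mono_set (Ioo_subset_Ioo_right hx₀.2))
  have hr := hright u u' u'' (hu.mono hx₀.1 hx₀.2 le_rfl)
    (fun t ht => hloc t 1 (hx₀.1.trans ht.1.le) le_rfl ht.2 fun h => ht.1.not_ge h.1)
    (hA.mono_set (Ioo_subset_Ioo_left hx₀.1))
  have hsub_l : Ioo 0 x₀ ⊆ Ioo (0 : ℝ) 1 := Ioo_subset_Ioo_right hx₀.2
  have hsub_r : Ioo x₀ 1 ⊆ Ioo (0 : ℝ) 1 := Ioo_subset_Ioo_left hx₀.1
  rw [sqL2, ← setIntegral_Ioo_add_Ioo hx₀.1 hx₀.2 hu'2, add_mul]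
  gcongr ?_ + ?_
  · exact hl.trans (mul_le_mul_of_nonneg_left (add_le_add (hmono hu0 hu2 hsub_l)
      (hmono hA0 hA hsub_l)) hC₁)
  · exact hr.trans (mul_le_mul_of_nonneg_left (add_le_add (hmono hu0 hu2 hsub_r)
      (hmono hA0 hA hsub_r)) hC₂)

/-- for a strongly degenerate `a` satisfying Hypothesis (H), on `H²_a(0,1)`
we have `‖u'‖² ≤ C(‖u‖² + ‖√a u''‖²)`, hence the norms `‖·‖_{H²_a}` and `‖·‖_{2,a}`
are equivalent. -/
theorem statement1 (a : ℝ → ℝ) (x₀ : ℝ) (ha : StronglyDeg a x₀) (hH : HypH a x₀) :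
    ∃ C > 0, ∀ u u' u'' : ℝ → ℝ,
      -- u ∈ H¹(0,1), with u' locally absolutely continuous on [0,1] \ {x₀}
      ACOn 0 1 u u' →
      MeasureTheory.IntegrableOn (fun x => (u' x) ^ 2) (Set.Ioo 0 1) →
      LocACOn x₀ u' u'' →
      -- √a·u'' ∈ L²(0,1)
      MeasureTheory.IntegrableOn (fun x => a x * (u'' x) ^ 2) (Set.Ioo 0 1) →
      -- the main estimate
      (sqL2 u' ≤ C * (sqL2 u + ∫ x in Set.Ioo (0:ℝ) 1, a x * (u'' x) ^ 2)) ∧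
      -- consequently the two (squared) norms are equivalent
      (sqL2 u + ∫ x in Set.Ioo (0:ℝ) 1, a x * (u'' x) ^ 2 ≤
        sqL2 u + sqL2 u' + ∫ x in Set.Ioo (0:ℝ) 1, a x * (u'' x) ^ 2) ∧
      (sqL2 u + sqL2 u' + ∫ x in Set.Ioo (0:ℝ) 1, a x * (u'' x) ^ 2 ≤
        (1 + C) * (sqL2 u + ∫ x in Set.Ioo (0:ℝ) 1, a x * (u'' x) ^ 2)) := by
  obtain ⟨-, hx₀, hax₀, hpos, -⟩ := ha
  have ha0 : ∀ x ∈ Icc (0 : ℝ) 1, 0 ≤ a x := fun x hx =>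
    (eq_or_ne x x₀).elim (fun h => h ▸ hax₀.ge) fun h => (hpos x hx h).le
  obtain ⟨p, M, hp1, hp2, hM, hw⟩ := hH.exists_rpow_abs_sub_le hx₀ hpos
  obtain ⟨C, hC, hest⟩ := exists_sqL2_deriv_le hx₀ ha0 hp1 hp2 hM hw
  refine ⟨C + 1, by positivity, fun u u' u'' hu hu'2 hloc hA => ?_⟩
  have hmain := hest u u' u'' hu hu'2 hloc hA
  have hN : 0 ≤ sqL2 u + ∫ x in Ioo (0 : ℝ) 1, a x * u'' x ^ 2 :=
    add_nonneg (setIntegral_nonneg measurableSet_Ioo fun _ _ => sq_nonneg _)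
      (setIntegral_nonneg measurableSet_Ioo fun x hx =>
        mul_nonneg (ha0 x (Ioo_subset_Icc_self hx)) (sq_nonneg _))
  have hu'0 : 0 ≤ sqL2 u' := setIntegral_nonneg measurableSet_Ioo fun _ _ => sq_nonneg _
  exact ⟨by nlinarith, by linarith, by nlinarith⟩
end

section
/- For every u ∈ D_w(A₂) one has ⟨A₂u, u⟩_{Y_μ} = ∫₀¹ (u'')² dx − (γ₀/β₀) u(0)² − (γ₁/β₁) u(1)² ≥ 0; i.e. the operator A₂ : D_w(A₂) → Y_μ is non negative. -/
open MeasureTheory Set Filter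

/-- Membership of `u` (with derivatives `u₁ = u'`, `u₂ = u''`, `u₃ = u'''`, `u₄ = u''''`)
in the domain `D_w(A₂)` (weakly degenerate case): `u ∈ H²(0,1)`, the fourth derivative
`u''''` exists (so `u ∈ W^{4,1}(0,1) ⊂ C³([0,1])`) with `∫ a (u'''')² < ∞`, and
`u''(0) = u''(1) = 0`. -/
def MemD2w (a : ℝ → ℝ) (u u₁ u₂ u₃ u₄ : ℝ → ℝ) : Prop :=
  ACOn 0 1 u u₁ ∧ ACOn 0 1 u₁ u₂ ∧ ACOn 0 1 u₂ u₃ ∧ ACOn 0 1 u₃ u₄ ∧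
  MeasureTheory.IntegrableOn (fun x => (u₁ x) ^ 2) (Set.Ioo 0 1) ∧
  MeasureTheory.IntegrableOn (fun x => (u₂ x) ^ 2) (Set.Ioo 0 1) ∧
  MeasureTheory.IntegrableOn (fun x => a x * (u₄ x) ^ 2) (Set.Ioo 0 1) ∧
  u₂ 0 = 0 ∧ u₂ 1 = 0

/-- The inner product of `Y_μ = L²((0,1), dx/a) ⊕ ℝ_{1/β₀} ⊕ ℝ_{1/β₁}`. -/
noncomputable def innerY (a : ℝ → ℝ) (β₀ β₁ : ℝ) (f g : ℝ → ℝ) : ℝ :=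
  (∫ x in Set.Ioo (0:ℝ) 1, f x * g x / a x) + (f 0 * g 0) / β₀ + (f 1 * g 1) / β₁

/-- The element `A₂u` of `Y_μ`: it equals `a u''''` on `(0,1)` and its boundary values
are dictated by the generalized Wentzell boundary conditions:
`(A₂u)(j) = (-1)^j β_j u'''(j) - γ_j u(j)`. -/
noncomputable def A2fun (a : ℝ → ℝ) (β₀ β₁ γ₀ γ₁ : ℝ) (u u₃ u₄ : ℝ → ℝ) : ℝ → ℝ :=
  fun x =>
    if x = 0 then β₀ * u₃ 0 - γ₀ * u 0
    else if x = 1 then -β₁ * u₃ 1 - γ₁ * u 1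
    else a x * u₄ x

/-! Two integrations by parts turn `∫ (a u'''') u / a` into `∫ (u'')²` plus boundary terms
(the weight cancels because `a` vanishes only on the null set `{x₀}`): the terms `u''(j) u'(j)`
vanish since `u''(0) = u''(1) = 0`, and the terms `u'''(j) u(j)` cancel against the Wentzell
boundary values of `A₂u`, leaving `-(γ_j/β_j) u(j)² ≥ 0`. A function of the form
`f c + ∫ c..x, f'` is absolutely continuous with `deriv f = f'` a.e. (Lebesgue differentiation),
so integration by parts for absolutely continuous functions applies. -/

theorem AbsolutelyContinuousOnInterval.congr {f g : ℝ → ℝ} {a b : ℝ}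
    (hf : AbsolutelyContinuousOnInterval f a b) (hfg : EqOn f g (uIcc a b)) :
    AbsolutelyContinuousOnInterval g a b := by
  refine hf.congr' (eventually_inf_principal.2 (Eventually.of_forall fun E hE => ?_))
  refine Finset.sum_congr rfl fun i hi => ?_
  rw [hfg (hE.1 i hi).1, hfg (hE.1 i hi).2]

namespace ACOn

variable {c d : ℝ} {f f' g g' : ℝ → ℝ}

theorem intervalIntegrable_s17 (h : ACOn c d f f') (hcd : c ≤ d) :
    IntervalIntegrable f' volume c d :=
  (intervalIntegrable_iff_integrableOn_Icc_of_le hcd).2 h.1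

theorem absolutelyContinuousOnInterval (h : ACOn c d f f') (hcd : c ≤ d) :
    AbsolutelyContinuousOnInterval f c d := by
  have hconst : AbsolutelyContinuousOnInterval (fun _ => f c) c d :=
    (LipschitzWith.const (f c)).lipschitzOnWith.absolutelyContinuousOnInterval
  refine (hconst.add ((h.intervalIntegrable_s17 hcd).absolutelyContinuousOnInterval_intervalIntegral
    (c := c) left_mem_uIcc)).congr fun x hx => ?_
  rw [uIcc_of_le hcd] at hx
  exact (h.2 x hx).symm

theorem ae_hasDerivAt (h : ACOn c d f f') (hcd : c ≤ d) :
    ∀ᵐ x, x ∈ Ioo c d → HasDerivAt f (f' x) x := by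
  filter_upwards [(h.intervalIntegrable_s17 hcd).ae_hasDerivAt_integral] with x hx hxcd
  have hxc : x ∈ uIcc c d := by rw [uIcc_of_le hcd]; exact Ioo_subset_Icc_self hxcd
  refine ((hx hxc c left_mem_uIcc).const_add (f c)).congr_of_eventuallyEq ?_
  filter_upwards [Ioo_mem_nhds hxcd.1 hxcd.2] with y hy
  exact h.2 y (Ioo_subset_Icc_self hy)

theorem ae_deriv_eq (h : ACOn c d f f') (hcd : c ≤ d) :
    ∀ᵐ x, x ∈ uIoc c d → deriv f x = f' x := by
  have hne : ∀ᵐ x : ℝ, x ≠ d := by simp [ae_iff, measure_singleton]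
  filter_upwards [h.ae_hasDerivAt hcd, hne] with x hx hxd hxcd
  rw [uIoc_of_le hcd] at hxcd
  exact (hx ⟨hxcd.1, lt_of_le_of_ne hxcd.2 hxd⟩).deriv

theorem integral_mul_eq_sub_integral_mul (hf : ACOn c d f f') (hg : ACOn c d g g')
    (hcd : c ≤ d) :
    ∫ x in c..d, f' x * g x = f d * g d - f c * g c - ∫ x in c..d, f x * g' x := by
  have hparts := (hf.absolutelyContinuousOnInterval hcd).integral_mul_deriv_eq_deriv_mul
    (hg.absolutelyContinuousOnInterval hcd)
  have hf' : ∫ x in c..d, deriv f x * g x = ∫ x in c..d, f' x * g x :=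
    intervalIntegral.integral_congr_ae <| by
      filter_upwards [hf.ae_deriv_eq hcd] with x hx hxcd
      rw [hx hxcd]
  have hg' : ∫ x in c..d, f x * deriv g x = ∫ x in c..d, f x * g' x :=
    intervalIntegral.integral_congr_ae <| by
      filter_upwards [hg.ae_deriv_eq hcd] with x hx hxcd
      rw [hx hxcd]
  linarith

end ACOn

theorem integral_fourth_deriv_mul_eq {c d : ℝ} {u u₁ u₂ u₃ u₄ : ℝ → ℝ} (hcd : c ≤ d)
    (hu : ACOn c d u u₁) (hu₁ : ACOn c d u₁ u₂) (hu₂ : ACOn c d u₂ u₃) (hu₃ : ACOn c d u₃ u₄)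
    (hc : u₂ c = 0) (hd : u₂ d = 0) :
    ∫ x in c..d, u₄ x * u x = u₃ d * u d - u₃ c * u c + ∫ x in c..d, u₂ x ^ 2 := by
  rw [hu₃.integral_mul_eq_sub_integral_mul hu hcd,
    hu₂.integral_mul_eq_sub_integral_mul hu₁ hcd, hc, hd]
  simp only [sq]
  ring

theorem setIntegral_A2fun_mul_div {a u u₃ u₄ : ℝ → ℝ} {β₀ β₁ γ₀ γ₁ : ℝ}
    (ha : ∀ᵐ x, x ∈ Ioo (0 : ℝ) 1 → a x ≠ 0) :
    ∫ x in Ioo (0 : ℝ) 1, A2fun a β₀ β₁ γ₀ γ₁ u u₃ u₄ x * u x / a x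
      = ∫ x in (0 : ℝ)..1, u₄ x * u x := by
  rw [intervalIntegral.integral_of_le zero_le_one, integral_Ioc_eq_integral_Ioo]
  refine setIntegral_congr_ae measurableSet_Ioo ?_
  filter_upwards [ha] with x hax hx
  simp only [A2fun, if_neg hx.1.ne', if_neg hx.2.ne]
  field_simp [hax hx]

theorem WeaklyDeg.ae_ne_zero {a : ℝ → ℝ} {x₀ : ℝ} (ha : WeaklyDeg a x₀) :
    ∀ᵐ x, x ∈ Icc (0 : ℝ) 1 → a x ≠ 0 := by
  have hne : ∀ᵐ x : ℝ, x ≠ x₀ := by simp [ae_iff, measure_singleton]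
  filter_upwards [hne] with x hx hx01
  exact (ha.2.2.2.1 x hx01 hx).ne'

theorem statement17_general (β₀ β₁ γ₀ γ₁ : ℝ) (hβ₀ : 0 < β₀) (hβ₁ : 0 < β₁)
    (hγ₀ : γ₀ ≤ 0) (hγ₁ : γ₁ ≤ 0)
    (a : ℝ → ℝ) (x₀ : ℝ) (ha : WeaklyDeg a x₀)
    (u u₁ u₂ u₃ u₄ : ℝ → ℝ) (hu : MemD2w a u u₁ u₂ u₃ u₄) :
    innerY a β₀ β₁ (A2fun a β₀ β₁ γ₀ γ₁ u u₃ u₄) u =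
      (∫ x in Set.Ioo (0:ℝ) 1, (u₂ x) ^ 2)
        - (γ₀ / β₀) * (u 0) ^ 2 - (γ₁ / β₁) * (u 1) ^ 2 ∧
    0 ≤ innerY a β₀ β₁ (A2fun a β₀ β₁ γ₀ γ₁ u u₃ u₄) u := by
  obtain ⟨hu, hu₁, hu₂, hu₃, -, -, -, h0, h1⟩ := hu
  have ha' : ∀ᵐ x, x ∈ Ioo (0 : ℝ) 1 → a x ≠ 0 :=
    ha.ae_ne_zero.mono fun x hx hx01 => hx (Ioo_subset_Icc_self hx01)
  have hL2 : ∫ x in (0 : ℝ)..1, u₂ x ^ 2 = ∫ x in Ioo (0 : ℝ) 1, u₂ x ^ 2 := by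
    rw [intervalIntegral.integral_of_le zero_le_one, integral_Ioc_eq_integral_Ioo]
  have heq : innerY a β₀ β₁ (A2fun a β₀ β₁ γ₀ γ₁ u u₃ u₄) u =
      (∫ x in Ioo (0 : ℝ) 1, u₂ x ^ 2) - γ₀ / β₀ * u 0 ^ 2 - γ₁ / β₁ * u 1 ^ 2 := by
    rw [innerY, setIntegral_A2fun_mul_div ha',
      integral_fourth_deriv_mul_eq zero_le_one hu hu₁ hu₂ hu₃ h0 h1, hL2]
    simp only [A2fun, one_ne_zero, ↓reduceIte]
    field_simp
    ring
  refine ⟨heq, heq ▸ ?_⟩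
  have hL2_nonneg : 0 ≤ ∫ x in Ioo (0 : ℝ) 1, u₂ x ^ 2 :=
    setIntegral_nonneg measurableSet_Ioo fun x _ => sq_nonneg _
  have hbd₀ : γ₀ / β₀ * u 0 ^ 2 ≤ 0 :=
    mul_nonpos_of_nonpos_of_nonneg (div_nonpos_of_nonpos_of_nonneg hγ₀ hβ₀.le) (sq_nonneg _)
  have hbd₁ : γ₁ / β₁ * u 1 ^ 2 ≤ 0 :=
    mul_nonpos_of_nonpos_of_nonneg (div_nonpos_of_nonpos_of_nonneg hγ₁ hβ₁.le) (sq_nonneg _)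
  linarith

/-- the operator `A₂` with generalized Wentzell boundary conditions is
non negative on `Y_μ`:
`⟨A₂u, u⟩ = ∫ (u'')² - (γ₀/β₀) u(0)² - (γ₁/β₁) u(1)² ≥ 0`. -/
theorem statement17 (β₀ β₁ γ₀ γ₁ : ℝ) (hβ₀ : 0 < β₀) (hβ₁ : 0 < β₁)
    (hγ₀ : γ₀ ≤ 0) (hγ₁ : γ₁ ≤ 0)
    (a : ℝ → ℝ) (x₀ : ℝ) (hx₀ : x₀ ∈ Set.Ioo (0:ℝ) 1) (ha : WeaklyDeg a x₀)
    (u u₁ u₂ u₃ u₄ : ℝ → ℝ) (hu : MemD2w a u u₁ u₂ u₃ u₄) :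
    innerY a β₀ β₁ (A2fun a β₀ β₁ γ₀ γ₁ u u₃ u₄) u =
      (∫ x in Set.Ioo (0:ℝ) 1, (u₂ x) ^ 2)
        - (γ₀ / β₀) * (u 0) ^ 2 - (γ₁ / β₁) * (u 1) ^ 2 ∧
    0 ≤ innerY a β₀ β₁ (A2fun a β₀ β₁ γ₀ γ₁ u u₃ u₄) u :=
  statement17_general β₀ β₁ γ₀ γ₁ hβ₀ hβ₁ hγ₀ hγ₁ a x₀ ha u u₁ u₂ u₃ u₄ hu
end
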